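/- arXiv:1810.00861 — 7 statements merged into one kernel-verified Lean document; each statement's English description precedes it below -/
import Mathlib

section
/- For the one-dimensional W-shaped regularizer r(t) = min{|t-1|, |t+1|} and any λ > 0 and x ∈ R, the set argmin_{t ∈ R} { (1/2)(t - x)^2 + λ r(t) } contains the point SoftThreshold(x, sign(x), λ) = sign(x) + sign(x - sign(x))·max(|x - sign(x)| - λ, 0). -/
/-- Sign with `sgn 0 = 1`. -/
noncomputable def sgn (t : ℝ) : ℝ := if 0 ≤ t then 1 else -1

/-- Soft-thresholding of `x` towards `c` with threshold `λ`. -/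
noncomputable def softThreshold (x c lam : ℝ) : ℝ :=
  c + sgn (x - c) * max (|x - c| - lam) 0

lemma key_opt (lam d u : ℝ) (hlam : 0 < lam) :
    (1/2)*(sgn d * max (|d|-lam) 0 - d)^2 + lam * max (|d|-lam) 0
      ≤ (1/2)*(u - d)^2 + lam*|u| := by
  have hu := le_abs_self u
  have hu' := neg_abs_le u
  unfold sgn
  rcases le_or_gt 0 d with h | h
  · rw [if_pos h, abs_of_nonneg h]
    rcases le_total (d - lam) 0 with h2 | h2
    · rw [max_eq_right h2]
      nlinarith [sq_nonneg u, mul_le_mul_of_nonneg_right (show d ≤ lam by linarith) (abs_nonneg u),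
        mul_le_mul_of_nonneg_left hu h]
    · rw [max_eq_left h2]
      nlinarith [sq_nonneg (u - d + lam)]
  · rw [if_neg (not_le.mpr h), abs_of_neg h]
    rcases le_total (-d - lam) 0 with h2 | h2
    · rw [max_eq_right h2]
      nlinarith [sq_nonneg u, mul_le_mul_of_nonneg_right (show -d ≤ lam by linarith) (abs_nonneg u),
        mul_le_mul_of_nonneg_left hu' (show (0:ℝ) ≤ -d by linarith)]
    · rw [max_eq_left h2]
      nlinarith [sq_nonneg (u - d - lam)]

lemma key_val (lam d : ℝ) (hlam : 0 < lam) :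
    (1/2)*(sgn d * max (|d|-lam) 0 - d)^2 + lam * max (|d|-lam) 0
      = min |d| lam * |d| - (min |d| lam)^2/2 := by
  unfold sgn
  rcases le_or_gt 0 d with h | h
  · rw [if_pos h, abs_of_nonneg h]
    rcases le_total (d - lam) 0 with h2 | h2
    · rw [max_eq_right h2, min_eq_left (by linarith)]; ring
    · rw [max_eq_left h2, min_eq_right (by linarith)]; ring
  · rw [if_neg (not_le.mpr h), abs_of_neg h]
    rcases le_total (-d - lam) 0 with h2 | h2
    · rw [max_eq_right h2, min_eq_left (by linarith)]; ring
    · rw [max_eq_left h2, min_eq_right (by linarith)]; ring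

lemma val_mono (lam a b : ℝ) (hlam : 0 < lam) (ha : 0 ≤ a) (hab : a ≤ b) :
    min a lam * a - (min a lam)^2/2 ≤ min b lam * b - (min b lam)^2/2 := by
  rcases le_total a lam with h1 | h1 <;> rcases le_total b lam with h2 | h2
  · rw [min_eq_left h1, min_eq_left h2]; nlinarith
  · rw [min_eq_left h1, min_eq_right h2]; nlinarith
  · rw [min_eq_right h1, min_eq_left h2]; nlinarith
  · rw [min_eq_right h1, min_eq_right h2]; nlinarith

lemma st_sub_c (lam x c : ℝ) :
    softThreshold x c lam - c = sgn (x - c) * max (|x - c| - lam) 0 := by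
  simp [softThreshold]

lemma st_sub_x (lam x c : ℝ) :
    softThreshold x c lam - x = sgn (x - c) * max (|x - c| - lam) 0 - (x - c) := by
  simp [softThreshold]; ring

lemma abs_st_sub_c (lam x c : ℝ) :
    |softThreshold x c lam - c| = max (|x - c| - lam) 0 := by
  rw [st_sub_c, abs_mul]
  have : |sgn (x - c)| = 1 := by unfold sgn; split_ifs <;> norm_num
  rw [this, one_mul, abs_of_nonneg (le_max_right _ _)]

lemma g_opt (lam x c t : ℝ) (hlam : 0 < lam) :
    (1/2)*(softThreshold x c lam - x)^2 + lam * |softThreshold x c lam - c|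
      ≤ (1/2)*(t - x)^2 + lam*|t - c| := by
  have h := key_opt lam (x - c) (t - c) hlam
  rw [abs_st_sub_c, st_sub_x]
  calc (1/2)*((sgn (x-c) * max (|x - c| - lam) 0 - (x - c)))^2 + lam * max (|x - c| - lam) 0
      ≤ (1/2)*((t - c) - (x - c))^2 + lam * |t - c| := h
    _ = (1/2)*(t - x)^2 + lam*|t - c| := by ring_nf

lemma g_val (lam x c : ℝ) (hlam : 0 < lam) :
    (1/2)*(softThreshold x c lam - x)^2 + lam * |softThreshold x c lam - c|
      = min |x - c| lam * |x - c| - (min |x - c| lam)^2/2 := by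
  rw [abs_st_sub_c, st_sub_x]
  exact key_val lam (x - c) hlam

/-- The point `SoftThreshold(x, sign(x), λ)` is a global minimizer of the
(nonconvex) prox objective `t ↦ (1/2)(t-x)² + λ min{|t-1|,|t+1|}`. -/
theorem softThreshold_mem_argmin_binary_prox (lam x : ℝ) (hlam : 0 < lam) :
    ∀ t : ℝ,
      (1/2) * (softThreshold x (sgn x) lam - x)^2
          + lam * min |softThreshold x (sgn x) lam - 1| |softThreshold x (sgn x) lam + 1|
        ≤ (1/2) * (t - x)^2 + lam * min |t - 1| |t + 1| := by
  intro t
  rcases le_or_gt 0 x with hx | hx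
  · have hsx : sgn x = 1 := if_pos hx
    rw [hsx]
    set S := softThreshold x 1 lam with hS
    have hS0 : 0 ≤ S := by
      rw [hS]
      unfold softThreshold sgn
      split_ifs with h
      · have := le_max_right (|x - 1| - lam) 0
        nlinarith [le_max_right (|x - 1| - lam) 0]
      · push_neg at h
        have habs : |x - 1| = 1 - x := by rw [abs_of_neg (by linarith)]; ring
        have hm : max (|x - 1| - lam) 0 ≤ 1 := by
          apply max_le <;> [linarith [habs]; norm_num]
        linarith
    have hmin : min |S - 1| |S + 1| = |S - 1| := by
      apply min_eq_left
      have h1 : |S - 1| ≤ S + 1 := abs_le.mpr ⟨by linarith, by linarith⟩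
      rw [abs_of_nonneg (by linarith : (0:ℝ) ≤ S + 1)]
      exact h1
    rw [hmin]
    rcases le_total |t - 1| |t + 1| with ht | ht
    · rw [min_eq_left ht]
      exact g_opt lam x 1 t hlam
    · rw [min_eq_right ht]
      have hxx : |x - 1| ≤ |x + 1| :=
        abs_le.mpr ⟨by linarith [abs_nonneg (x+1), le_abs_self (x+1)],
          by linarith [le_abs_self (x+1)]⟩ |>.trans (le_refl _)
      calc (1/2) * (S - x)^2 + lam * |S - 1|
          = min |x - 1| lam * |x - 1| - (min |x - 1| lam)^2/2 := g_val lam x 1 hlam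
        _ ≤ min |x - (-1)| lam * |x - (-1)| - (min |x - (-1)| lam)^2/2 := by
            apply val_mono lam _ _ hlam (abs_nonneg _)
            have : x - (-1) = x + 1 := by ring
            rw [this]; exact hxx
        _ ≤ (1/2)*(t - x)^2 + lam*|t - (-1)| := by
            have h := g_opt lam x (-1) t hlam
            rw [g_val lam x (-1) hlam] at h
            exact h
        _ = (1/2)*(t - x)^2 + lam*|t + 1| := by norm_num
  · have hsx : sgn x = -1 := if_neg (not_le.mpr hx)
    rw [hsx]
    set S := softThreshold x (-1) lam with hS
    have hS0 : S ≤ 0 := by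
      rw [hS]
      unfold softThreshold sgn
      split_ifs with h
      · have habs : |x + 1| = x + 1 := abs_of_nonneg (by linarith)
        have hm : max (|x - (-1)| - lam) 0 ≤ 1 := by
          apply max_le
          · have : x - (-1) = x + 1 := by ring
            rw [this, habs]; linarith
          · norm_num
        linarith
      · push_neg at h
        nlinarith [le_max_right (|x - (-1)| - lam) 0]
    have hmin : min |S - 1| |S + 1| = |S + 1| := by
      apply min_eq_right
      have h1 : |S + 1| ≤ 1 - S := abs_le.mpr ⟨by linarith, by linarith⟩
      rw [abs_of_nonpos (by linarith : S - 1 ≤ 0)]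
      linarith
    rw [hmin]
    rcases le_total |t + 1| |t - 1| with ht | ht
    · rw [min_eq_right ht]
      have h := g_opt lam x (-1) t hlam
      have e1 : S - (-1) = S + 1 := by ring
      have e2 : t - (-1) = t + 1 := by ring
      rw [e1, e2] at h
      exact h
    · rw [min_eq_left ht]
      have hxx : |x + 1| ≤ |x - 1| :=
        abs_le.mpr ⟨by linarith [le_abs_self (x-1), neg_abs_le (x-1)],
          by linarith [neg_abs_le (x-1)]⟩
      have e1 : S - (-1) = S + 1 := by ring
      calc (1/2) * (S - x)^2 + lam * |S + 1|
          = min |x - (-1)| lam * |x - (-1)| - (min |x - (-1)| lam)^2/2 := by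
            rw [← e1]; exact g_val lam x (-1) hlam
        _ ≤ min |x - 1| lam * |x - 1| - (min |x - 1| lam)^2/2 := by
            apply val_mono lam _ _ hlam (abs_nonneg _)
            have : x - (-1) = x + 1 := by ring
            rw [this]; exact hxx
        _ ≤ (1/2)*(t - x)^2 + lam*|t - 1| := by
            have h := g_opt lam x 1 t hlam
            rw [g_val lam x 1 hlam] at h
            exact h
end

section
/- (Non-convergence of straight-through/BinaryConnect information-theoretically) Let f_1(x) = |x + 1/2| - 1/2 and f_{-1}(x) = |x - 1/2| - 1/2 on R. Then f_1 and f_{-1} are convex 1-Lipschitz, their derivatives agree at both x = 1 and x = -1 (f_1'(1) = f_{-1}'(1) = 1 and f_1'(-1) = f_{-1}'(-1) = -1), yet argmin_{x ∈ {-1,1}} f_1(x) = {-1} and argmin_{x ∈ {-1,1}} f_{-1}(x) = {1}. Consequently any deterministic algorithm whose output depends only on the derivative values of the objective at points of {-1,1} must output the same point on f_1 and f_{-1}, and hence fails to minimize over {-1,1} for at least one of them. -/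
lemma aux_deriv_pos (c a : ℝ) (h : 0 < a + c) :
    deriv (fun x => |x + c| - 1/2) a = 1 := by
  have hc : Continuous fun x : ℝ => x + c := by continuity
  have hev : (fun x : ℝ => |x + c| - 1/2) =ᶠ[nhds a] (fun x => x + c - 1/2) := by
    filter_upwards [hc.continuousAt (eventually_gt_nhds h)] with x hx
    rw [abs_of_pos hx]
  rw [hev.deriv_eq]
  exact (((hasDerivAt_id a).add_const c).sub_const (1/2)).deriv

lemma aux_deriv_neg (c a : ℝ) (h : a + c < 0) :
    deriv (fun x => |x + c| - 1/2) a = -1 := by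
  have hc : Continuous fun x : ℝ => x + c := by continuity
  have hev : (fun x : ℝ => |x + c| - 1/2) =ᶠ[nhds a] (fun x => -(x + c) - 1/2) := by
    filter_upwards [hc.continuousAt (eventually_lt_nhds h)] with x hx
    rw [abs_of_neg hx]
  rw [hev.deriv_eq]
  have : HasDerivAt (fun x : ℝ => -(x + c) - 1/2) (-1) a :=
    (((hasDerivAt_id a).add_const c).neg).sub_const (1/2)
  simpa using this.deriv

lemma aux_lip (c : ℝ) : LipschitzWith 1 (fun x : ℝ => |x + c| - 1/2) := by
  apply LipschitzWith.of_dist_le_mul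
  intro x y
  simp only [Real.dist_eq, NNReal.coe_one, one_mul]
  have h1 : |x + c| - 1/2 - (|y + c| - 1/2) = |x + c| - |y + c| := by ring
  rw [h1]
  calc |(|x + c|) - (|y + c|)| ≤ |(x + c) - (y + c)| := abs_abs_sub_abs_le_abs_sub _ _
    _ = |x - y| := by congr 1; ring

lemma aux_conv (c : ℝ) : ConvexOn ℝ Set.univ (fun x : ℝ => |x + c| - 1/2) := by
  refine ⟨convex_univ, fun x _ y _ a b ha hb hab => ?_⟩
  simp only [smul_eq_mul]
  have h1 : a * x + b * y + c = a * (x + c) + b * (y + c) := by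
    have : a * c + b * c = c := by rw [← add_mul, hab, one_mul]
    linarith
  rw [h1]
  calc |a * (x + c) + b * (y + c)| - 1/2
      ≤ |a * (x + c)| + |b * (y + c)| - 1/2 := by linarith [abs_add_le (a * (x + c)) (b * (y + c))]
    _ = a * |x + c| + b * |y + c| - 1/2 := by
        rw [abs_mul, abs_mul, abs_of_nonneg ha, abs_of_nonneg hb]
    _ = a * (|x + c| - 1/2) + b * (|y + c| - 1/2) := by
        have : a * (1/2) + b * (1/2) = 1/2 := by rw [← add_mul, hab, one_mul]
        ring_nf
        linarith

/-- The two-function toy failure case for BinaryConnect: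
`f₁(x) = |x + 1/2| - 1/2` and `f₋₁(x) = |x - 1/2| - 1/2` are convex and
1-Lipschitz, have the same derivatives at `±1`, but have different minimizers
over `{-1, 1}`; hence any deterministic algorithm whose output depends only on
the derivatives at `{-1, 1}` fails to minimize over `{-1,1}` for one of them. -/
theorem binaryConnect_toy_failure :
    let f1 : ℝ → ℝ := fun x => |x + 1/2| - 1/2
    let fm1 : ℝ → ℝ := fun x => |x - 1/2| - 1/2
    ConvexOn ℝ Set.univ f1 ∧ ConvexOn ℝ Set.univ fm1 ∧
    LipschitzWith 1 f1 ∧ LipschitzWith 1 fm1 ∧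
    deriv f1 1 = 1 ∧ deriv fm1 1 = 1 ∧
    deriv f1 (-1) = -1 ∧ deriv fm1 (-1) = -1 ∧
    f1 (-1) < f1 1 ∧ fm1 1 < fm1 (-1) ∧
    ∀ A : ℝ → ℝ → ℝ,
      ¬ (A (deriv f1 (-1)) (deriv f1 1) = -1 ∧
         A (deriv fm1 (-1)) (deriv fm1 1) = 1) := by
  intro f1 fm1
  have hsub : fm1 = fun x => |x + (-(1/2))| - 1/2 := by
    funext x; simp [fm1, sub_eq_add_neg]
  have d1 : deriv f1 1 = 1 := aux_deriv_pos _ _ (by norm_num)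
  have d2 : deriv fm1 1 = 1 := by rw [hsub]; exact aux_deriv_pos _ _ (by norm_num)
  have d3 : deriv f1 (-1) = -1 := aux_deriv_neg _ _ (by norm_num)
  have d4 : deriv fm1 (-1) = -1 := by rw [hsub]; exact aux_deriv_neg _ _ (by norm_num)
  refine ⟨aux_conv _, by rw [hsub]; exact aux_conv _, aux_lip _, by rw [hsub]; exact aux_lip _,
    d1, d2, d3, d4, ?_, ?_, ?_⟩
  · show |(-1 : ℝ) + 1/2| - 1/2 < |(1 : ℝ) + 1/2| - 1/2
    rw [show |(-1 : ℝ) + 1/2| = 1/2 by rw [abs_of_neg] <;> norm_num,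
        show |(1 : ℝ) + 1/2| = 3/2 by rw [abs_of_pos] <;> norm_num]
    norm_num
  · show |(1 : ℝ) - 1/2| - 1/2 < |(-1 : ℝ) - 1/2| - 1/2
    rw [show |(1 : ℝ) - 1/2| = 1/2 by rw [abs_of_pos] <;> norm_num,
        show |(-1 : ℝ) - 1/2| = 3/2 by rw [abs_of_neg] <;> norm_num]
    norm_num
  · rintro A ⟨h1, h2⟩
    rw [d3, d1] at h1
    rw [d4, d2] at h2
    rw [h1] at h2
    norm_num at h2
end

section
/- (Convergence of ProxQuant) Let L : R^d → R be β-smooth and R : R^d → R differentiable; set F(θ) = L(θ) + λR(θ) and assume F is bounded below by F*. Run the prox-gradient iteration θ_{t+1} = argmin_θ { L(θ_t) + ⟨θ - θ_t, ∇L(θ_t)⟩ + β‖θ - θ_t‖² + λR(θ) } (stepsize η = 1/(2β)) for T steps, assuming each argmin exists. Then min_{1 ≤ t ≤ T} ‖∇F(θ_t)‖² ≤ 18β(F(θ_0) - F*)/T. -/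
open Set Filter InnerProductSpace

local notation "⟪" x ", " y "⟫" => @inner ℝ _ _ x y

section helpers
variable {E : Type*} [NormedAddCommGroup E] [InnerProductSpace ℝ E] [CompleteSpace E]

lemma inner_gradient_eq_fderiv (f : E → ℝ) (x v : E) :
    ⟪gradient f x, v⟫ = fderiv ℝ f x v := by
  rw [gradient]
  exact toDual_symm_apply

lemma gradient_eq_of_inner {f : E → ℝ} {x w : E}
    (h : ∀ v, fderiv ℝ f x v = ⟪w, v⟫) : gradient f x = w := by
  have h2 : fderiv ℝ f x = toDual ℝ E w := by
    ext v
    rw [toDual_apply_apply]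
    exact h v
  rw [gradient, h2, LinearIsometryEquiv.symm_apply_apply]

lemma descent_lemma {β : ℝ} (hβ : 0 < β) {L : E → ℝ} (hL : Differentiable ℝ L)
    (hLip : ∀ x y, ‖gradient L x - gradient L y‖ ≤ β * ‖x - y‖) (x y : E) :
    L y ≤ L x + ⟪y - x, gradient L x⟫ + β / 2 * ‖y - x‖ ^ 2 := by
  set v := y - x with hv
  set g := gradient L x with hg
  clear_value v g
  have hc : ∀ t : ℝ, HasDerivAt (fun t : ℝ => x + t • v) v t := by
    intro t
    simpa using ((hasDerivAt_id t).smul_const v).const_add x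
  have hLd : ∀ t : ℝ, HasDerivAt (fun t : ℝ => L (x + t • v))
      ⟪gradient L (x + t • v), v⟫ t := by
    intro t
    have h1 := ((hL (x + t • v)).hasGradientAt.hasFDerivAt).comp_hasDerivAt t (hc t)
    simp [toDual_apply_apply] at h1 ⊢
    exact h1
  have hf : ∀ t : ℝ, HasDerivAt (fun t : ℝ => L (x + t • v) - t * ⟪v, g⟫)
      (⟪gradient L (x + t • v), v⟫ - ⟪v, g⟫) t := by
    intro t
    exact (hLd t).sub (hasDerivAt_mul_const _)
  have hB : ∀ t : ℝ, HasDerivAt (fun t : ℝ => L x + β / 2 * ‖v‖ ^ 2 * t ^ 2)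
      (β * ‖v‖ ^ 2 * t) t := by
    intro t
    have := ((hasDerivAt_pow 2 t).const_mul (β / 2 * ‖v‖ ^ 2)).const_add (L x)
    refine this.congr_deriv ?_
    ring
  have hbound : ∀ t ∈ Ico (0:ℝ) 1,
      ⟪gradient L (x + t • v), v⟫ - ⟪v, g⟫ ≤ β * ‖v‖ ^ 2 * t := by
    intro t ht
    have h1 : ⟪gradient L (x + t • v), v⟫ - ⟪v, g⟫
        = ⟪gradient L (x + t • v) - g, v⟫ := by
      rw [inner_sub_left, real_inner_comm v g]
    rw [h1]
    calc ⟪gradient L (x + t • v) - g, v⟫ ≤ ‖gradient L (x + t • v) - g‖ * ‖v‖ :=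
          real_inner_le_norm _ _
      _ ≤ (β * ‖x + t • v - x‖) * ‖v‖ := by
          apply mul_le_mul_of_nonneg_right _ (norm_nonneg _)
          rw [hg]
          exact hLip _ _
      _ = β * ‖v‖ ^ 2 * t := by
          have h2 : ‖x + t • v - x‖ = t * ‖v‖ := by
            simp [norm_smul, abs_of_nonneg ht.1]
          rw [h2]; ring
  have key := image_le_of_deriv_right_le_deriv_boundary
    (f := fun t : ℝ => L (x + t • v) - t * ⟪v, g⟫)
    (f' := fun t => ⟪gradient L (x + t • v), v⟫ - ⟪v, g⟫)
    (B := fun t : ℝ => L x + β / 2 * ‖v‖ ^ 2 * t ^ 2)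
    (B' := fun t => β * ‖v‖ ^ 2 * t) (a := 0) (b := 1)
    (fun t _ => ((hf t).continuousAt).continuousWithinAt)
    (fun t ht => (hf t).hasDerivWithinAt)
    (by simp)
    (fun t _ => ((hB t).continuousAt).continuousWithinAt)
    (fun t ht => (hB t).hasDerivWithinAt)
    (fun t ht => hbound t ht)
  have h3 := key (x := 1) (by norm_num)
  simp only [one_smul, one_pow, mul_one, one_mul] at h3
  have hxy : x + v = y := by rw [hv]; abel
  rw [hxy] at h3
  linarith

lemma stationary {β lam : ℝ} {R : E → ℝ} (hR : Differentiable ℝ R) {c x₁ g : E}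
    (hmin : ∀ θ' : E, ⟪x₁ - c, g⟫ + β * ‖x₁ - c‖ ^ 2 + lam * R x₁
        ≤ ⟪θ' - c, g⟫ + β * ‖θ' - c‖ ^ 2 + lam * R θ') :
    g + (2 * β) • (x₁ - c) + lam • gradient R x₁ = 0 := by
  set φ : E → ℝ := fun θ' => ⟪θ' - c, g⟫ + β * ⟪θ' - c, θ' - c⟫ + lam * R θ' with hφ
  have hmin' : IsLocalMin φ x₁ := by
    apply Filter.Eventually.of_forall
    intro θ'
    simpa only [hφ, real_inner_self_eq_norm_sq] using hmin θ'
  have h1 : HasFDerivAt (fun θ' : E => θ' - c) (ContinuousLinearMap.id ℝ E) x₁ :=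
    (hasFDerivAt_id x₁).sub_const c
  have h2 := h1.inner ℝ (hasFDerivAt_const g x₁)
  have h3 := h1.inner ℝ h1
  have h4 := (hR x₁).hasFDerivAt
  have hD : HasFDerivAt φ
      ((((fderivInnerCLM ℝ (x₁ - c, g)).comp ((ContinuousLinearMap.id ℝ E).prod 0))
        + β • ((fderivInnerCLM ℝ (x₁ - c, x₁ - c)).comp
            ((ContinuousLinearMap.id ℝ E).prod (ContinuousLinearMap.id ℝ E))))
        + lam • fderiv ℝ R x₁) x₁ := (h2.add (h3.const_mul β)).add (h4.const_mul lam)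
  have hzero := hmin'.fderiv_eq_zero
  rw [hD.fderiv] at hzero
  have heval : ∀ v : E, ⟪g + (2 * β) • (x₁ - c) + lam • gradient R x₁, v⟫ = 0 := by
    intro v
    have hv := congrFun (congrArg (fun (f : E →L[ℝ] ℝ) => (f : E → ℝ)) hzero) v
    simp only [ContinuousLinearMap.add_apply, ContinuousLinearMap.coe_smul', Pi.smul_apply,
      ContinuousLinearMap.coe_comp', Function.comp_apply, ContinuousLinearMap.prod_apply,
      ContinuousLinearMap.coe_id', id_eq, ContinuousLinearMap.zero_apply,
      fderivInnerCLM_apply, inner_zero_right, ContinuousLinearMap.coe_zero, Pi.zero_apply,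
      smul_eq_mul, add_zero] at hv
    rw [inner_add_left, inner_add_left, real_inner_smul_left, real_inner_smul_left,
      inner_gradient_eq_fderiv]
    have e1 : ⟪v, g⟫ = ⟪g, v⟫ := real_inner_comm g v
    have e2 : ⟪v, x₁ - c⟫ = ⟪x₁ - c, v⟫ := real_inner_comm (x₁ - c) v
    rw [e1, e2] at hv
    linear_combination hv
  have hfin := heval (g + (2 * β) • (x₁ - c) + lam • gradient R x₁)
  exact inner_self_eq_zero.mp hfin

lemma gradient_add_const_mul {lam : ℝ} {L R : E → ℝ}
    (hL : Differentiable ℝ L) (hR : Differentiable ℝ R) (x : E) :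
    gradient (fun x => L x + lam * R x) x = gradient L x + lam • gradient R x := by
  apply gradient_eq_of_inner
  intro v
  have hd : HasFDerivAt (fun x => L x + lam * R x) (fderiv ℝ L x + lam • fderiv ℝ R x) x :=
    (hL x).hasFDerivAt.add ((hR x).hasFDerivAt.const_mul lam)
  rw [hd.fderiv]
  rw [inner_add_left, real_inner_smul_left, inner_gradient_eq_fderiv, inner_gradient_eq_fderiv]
  simp

end helpers

/-- Convergence of ProxQuant: with `L` β-smooth, `R` differentiable,
`F = L + λR` bounded below by `F*`, running the prox-gradient iteration
(stepsize `η = 1/(2β)`) for `T` steps yields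
`min_{1 ≤ t ≤ T} ‖∇F(θ_t)‖² ≤ 18β(F(θ₀) - F*)/T`. -/
theorem proxQuant_convergence {d : ℕ} (β lam Fstar : ℝ) (hβ : 0 < β) (hlam : 0 ≤ lam)
    (L R : EuclideanSpace ℝ (Fin d) → ℝ)
    (hL : Differentiable ℝ L)
    (hLip : ∀ x y, ‖gradient L x - gradient L y‖ ≤ β * ‖x - y‖)
    (hR : Differentiable ℝ R)
    (hbdd : ∀ θ, Fstar ≤ L θ + lam * R θ)
    (θ : ℕ → EuclideanSpace ℝ (Fin d))
    (hmin : ∀ t θ', L (θ t) + inner ℝ (θ (t+1) - θ t) (gradient L (θ t))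
                      + β * ‖θ (t+1) - θ t‖^2 + lam * R (θ (t+1))
                  ≤ L (θ t) + inner ℝ (θ' - θ t) (gradient L (θ t))
                      + β * ‖θ' - θ t‖^2 + lam * R θ')
    (T : ℕ) (hT : 1 ≤ T) :
    ∃ t, 1 ≤ t ∧ t ≤ T ∧
      ‖gradient (fun x => L x + lam * R x) (θ t)‖^2
        ≤ 18 * β * (L (θ 0) + lam * R (θ 0) - Fstar) / T := by
  by_contra hcon
  push_neg at hcon
  set F : EuclideanSpace ℝ (Fin d) → ℝ := fun x => L x + lam * R x with hF
  set F0 : ℝ := L (θ 0) + lam * R (θ 0) with hF0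
  set c1 : ℝ := (F0 - Fstar) / T with hc1
  -- one-step decrease
  have step : ∀ t : ℕ, F (θ (t+1)) + (1 / (18 * β)) * ‖gradient F (θ (t+1))‖ ^ 2 ≤ F (θ t) := by
    intro t
    set x₀ := θ t
    set x₁ := θ (t+1)
    set g := gradient L x₀ with hg
    have h5 := hmin t x₀
    simp only [show x₀ - θ t = 0 from sub_self _, inner_zero_left, norm_zero] at h5
    have hdesc := descent_lemma hβ hL hLip x₀ x₁
    have hstat : g + (2 * β) • (x₁ - x₀) + lam • gradient R x₁ = 0 := by
      apply stationary hR
      intro θ'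
      have := hmin t θ'
      linarith
    have hgradF : gradient F x₁ = gradient L x₁ - g - (2 * β) • (x₁ - x₀) := by
      rw [hF, gradient_add_const_mul hL hR]
      have hl : lam • gradient R x₁ = -g - (2 * β) • (x₁ - x₀) := by
        have := hstat
        abel_nf at this ⊢
        linear_combination (norm := abel_nf) this
      rw [hl]
      abel
    have hnorm : ‖gradient F x₁‖ ≤ 3 * β * ‖x₁ - x₀‖ := by
      rw [hgradF]
      calc ‖gradient L x₁ - g - (2 * β) • (x₁ - x₀)‖
          ≤ ‖gradient L x₁ - g‖ + ‖(2 * β) • (x₁ - x₀)‖ := norm_sub_le _ _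
        _ ≤ β * ‖x₁ - x₀‖ + (2 * β) * ‖x₁ - x₀‖ := by
            have h6 : ‖(2 * β) • (x₁ - x₀)‖ = (2 * β) * ‖x₁ - x₀‖ := by
              rw [norm_smul, Real.norm_eq_abs, abs_of_pos (by linarith)]
            rw [h6]
            have := hLip x₁ x₀
            rw [hg]
            linarith
        _ = 3 * β * ‖x₁ - x₀‖ := by ring
    have hnorm2 : ‖gradient F x₁‖ ^ 2 ≤ 9 * β ^ 2 * ‖x₁ - x₀‖ ^ 2 := by
      have := pow_le_pow_left₀ (norm_nonneg _) hnorm 2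
      calc ‖gradient F x₁‖ ^ 2 ≤ (3 * β * ‖x₁ - x₀‖) ^ 2 := this
        _ = 9 * β ^ 2 * ‖x₁ - x₀‖ ^ 2 := by ring
    have h18 : (0:ℝ) < 1 / (18 * β) := by positivity
    have h7 : (1 / (18 * β)) * ‖gradient F x₁‖ ^ 2 ≤ β / 2 * ‖x₁ - x₀‖ ^ 2 := by
      have := mul_le_mul_of_nonneg_left hnorm2 h18.le
      calc (1 / (18 * β)) * ‖gradient F x₁‖ ^ 2
          ≤ (1 / (18 * β)) * (9 * β ^ 2 * ‖x₁ - x₀‖ ^ 2) := this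
        _ = β / 2 * ‖x₁ - x₀‖ ^ 2 := by field_simp; ring
    -- combine: F x₁ ≤ F x₀ - β/2 ‖Δ‖²
    have hFdec : F x₁ ≤ F x₀ - β / 2 * ‖x₁ - x₀‖ ^ 2 := by
      rw [hF]
      simp only []
      linarith
    linarith
  -- per-step strict decrease under the contradiction hypothesis
  have dec : ∀ t : ℕ, t + 1 ≤ T → F (θ (t+1)) + c1 < F (θ t) := by
    intro t ht1
    have hc := hcon (t+1) (Nat.succ_le_succ (Nat.zero_le t)) ht1
    have h18 : (0:ℝ) < 1 / (18 * β) := by positivity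
    have h8 : c1 < (1 / (18 * β)) * ‖gradient F (θ (t+1))‖ ^ 2 := by
      have := (mul_lt_mul_iff_right₀ h18).mpr hc
      calc c1 = (1 / (18 * β)) * (18 * β * (F0 - Fstar) / T) := by
            rw [hc1]; field_simp
        _ < (1 / (18 * β)) * ‖gradient F (θ (t+1))‖ ^ 2 := this
    have h9 : F (θ (t+1)) + c1 < F (θ (t+1)) + (1 / (18 * β)) * ‖gradient F (θ (t+1))‖ ^ 2 := by
      linarith
    exact lt_of_lt_of_le h9 (step t)
  have hF00 : F (θ 0) = F0 := rfl
  have main : ∀ n : ℕ, 1 ≤ n → n ≤ T → F (θ n) + n * c1 < F0 := by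
    intro n
    induction n with
    | zero => exact fun h => absurd h (by omega)
    | succ k ih =>
      intro _ hkT
      rcases Nat.eq_zero_or_pos k with hk0 | hkpos
      · subst hk0
        have hd := dec 0 hkT
        rw [hF00] at hd
        push_cast
        linarith
      · have hk1 : F (θ (k+1)) + c1 < F (θ k) := dec k hkT
        have hih := ih hkpos (le_trans (Nat.le_succ k) hkT)
        push_cast
        push_cast at hih
        linarith
  have hfinal := main T hT le_rfl
  have hTpos : (0:ℝ) < T := by exact_mod_cast hT
  have hTc : (T:ℝ) * c1 = F0 - Fstar := by
    rw [hc1]; field_simp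
  have := hbdd (θ T)
  rw [hF0] at hTc
  have hFT : F (θ T) = L (θ T) + lam * R (θ T) := rfl
  linarith [hfinal, hTc, this, hFT, hF0]
end

section
/- (Proximity guarantee) Under the assumptions of the ProxQuant convergence theorem (L β-smooth, F = L + λR bounded below by F*, prox-gradient iterates with stepsize 1/(2β)), the iterates satisfy Σ_{t=0}^{T-1} ‖θ_{t+1} - θ_t‖² ≤ 2(F(θ_0) - F*)/β, and hence min_{0 ≤ t ≤ T-1} ‖θ_{t+1} - θ_t‖² ≤ 2(F(θ_0) - F*)/(βT). -/
/-- Proximity guarantee for ProxQuant: the prox-gradient iterates with stepsize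
`1/(2β)` satisfy `Σ_{t=0}^{T-1} ‖θ_{t+1} - θ_t‖² ≤ 2(F(θ₀) - F*)/β`, hence
`min_{0 ≤ t ≤ T-1} ‖θ_{t+1} - θ_t‖² ≤ 2(F(θ₀) - F*)/(βT)`. -/
theorem proxQuant_proximity {d : ℕ} (β lam Fstar : ℝ) (hβ : 0 < β) (hlam : 0 ≤ lam)
    (L R : EuclideanSpace ℝ (Fin d) → ℝ)
    (hL : Differentiable ℝ L)
    (hsmooth : ∀ x y, L y ≤ L x + inner ℝ (gradient L x) (y - x) + (β/2) * ‖y - x‖^2)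
    (hbdd : ∀ θ, Fstar ≤ L θ + lam * R θ)
    (θ : ℕ → EuclideanSpace ℝ (Fin d))
    (hmin : ∀ t θ', L (θ t) + inner ℝ (θ (t+1) - θ t) (gradient L (θ t))
                      + β * ‖θ (t+1) - θ t‖^2 + lam * R (θ (t+1))
                  ≤ L (θ t) + inner ℝ (θ' - θ t) (gradient L (θ t))
                      + β * ‖θ' - θ t‖^2 + lam * R θ')
    (T : ℕ) (hT : 1 ≤ T) :
    (∑ t ∈ Finset.range T, ‖θ (t+1) - θ t‖^2
        ≤ 2 * (L (θ 0) + lam * R (θ 0) - Fstar) / β) ∧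
    (∃ t < T, ‖θ (t+1) - θ t‖^2
        ≤ 2 * (L (θ 0) + lam * R (θ 0) - Fstar) / (β * T)) := by
  set F : ℕ → ℝ := fun t => L (θ t) + lam * R (θ t) with hF
  -- one-step descent
  have hstep : ∀ t, (β/2) * ‖θ (t+1) - θ t‖^2 ≤ F t - F (t+1) := by
    intro t
    have h1 := hmin t (θ t)
    simp only [sub_self, inner_zero_left, norm_zero] at h1
    have h2 := hsmooth (θ t) (θ (t+1))
    have hic : (inner ℝ (θ (t+1) - θ t) (gradient L (θ t)) : ℝ)
        = inner ℝ (gradient L (θ t)) (θ (t+1) - θ t) := real_inner_comm _ _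
    simp only [hF]
    nlinarith [h1, h2, hic]
  have hsum : ∀ n, (β/2) * ∑ t ∈ Finset.range n, ‖θ (t+1) - θ t‖^2 ≤ F 0 - F n := by
    intro n
    rw [Finset.mul_sum]
    calc ∑ t ∈ Finset.range n, (β/2) * ‖θ (t+1) - θ t‖^2
        ≤ ∑ t ∈ Finset.range n, (F t - F (t+1)) :=
          Finset.sum_le_sum fun t _ => hstep t
      _ = F 0 - F n := Finset.sum_range_sub' F n
  have hmain : ∑ t ∈ Finset.range T, ‖θ (t+1) - θ t‖^2
      ≤ 2 * (L (θ 0) + lam * R (θ 0) - Fstar) / β := by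
    have h := hsum T
    have hb := hbdd (θ T)
    rw [le_div_iff₀ hβ]
    simp only [hF] at h
    nlinarith
  refine ⟨hmain, ?_⟩
  have hne : (Finset.range T).Nonempty := Finset.nonempty_range_iff.mpr (by omega)
  obtain ⟨t, ht, htmin⟩ := (Finset.range T).exists_min_image
    (fun t => ‖θ (t+1) - θ t‖^2) hne
  refine ⟨t, Finset.mem_range.mp ht, ?_⟩
  have hTpos : (0:ℝ) < T := by exact_mod_cast (by omega : 0 < T)
  rw [le_div_iff₀ (by positivity)]
  have : (T : ℝ) * ‖θ (t+1) - θ t‖^2 ≤ ∑ s ∈ Finset.range T, ‖θ (s+1) - θ s‖^2 := by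
    calc (T : ℝ) * ‖θ (t+1) - θ t‖^2
        = ∑ _s ∈ Finset.range T, ‖θ (t+1) - θ t‖^2 := by
          simp [Finset.sum_const, mul_comm]
      _ ≤ ∑ s ∈ Finset.range T, ‖θ (s+1) - θ s‖^2 :=
          Finset.sum_le_sum fun s hs => htmin s hs
  have h2 : ∑ s ∈ Finset.range T, ‖θ (s+1) - θ s‖^2
      ≤ 2 * (L (θ 0) + lam * R (θ 0) - Fstar) / β := hmain
  calc ‖θ (t+1) - θ t‖^2 * (β * T) = β * ((T:ℝ) * ‖θ (t+1) - θ t‖^2) := by ring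
    _ ≤ β * (2 * (L (θ 0) + lam * R (θ 0) - Fstar) / β) := by
        apply mul_le_mul_of_nonneg_left (le_trans this h2) hβ.le
    _ = 2 * (L (θ 0) + lam * R (θ 0) - Fstar) := by field_simp
end

section
/- (Non-convergence of lazy prox-gradient: oscillation) Let L(θ) = θ²/2 and let R be the smoothed W-shaped regularizer with parameter ε ∈ (0, 1/2]. Fix λ ≥ 1, stepsize η ∈ (0, 1/2], and initialization θ_0 = ηλ/(2λ + (2-η)ε). Then prox_{λR}(θ_0) = (2/η)θ_0, and the lazy prox-gradient iteration θ_{t+1} = θ_t - η·L'(prox_{λR}(θ_t)) satisfies θ_t = (-1)^t θ_0 for all t ≥ 0. -/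
set_option maxHeartbeats 1000000


/-- The smoothed W-shaped regularizer with smoothing radius `ε`. -/
noncomputable def smoothW (ε : ℝ) (θ : ℝ) : ℝ :=
  if |θ| < ε then -θ^2/(2*ε) + 1 - ε
  else if |θ| < 1 - ε then -|θ| + 1 - ε/2
  else if |θ| < 1 + ε then (|θ| - 1)^2/(2*ε)
  else |θ| - 1 - ε/2

theorem smoothW_neg (ε x : ℝ) : smoothW ε (-x) = smoothW ε x := by
  simp [smoothW, abs_neg]

theorem keyLem (ε lam th q : ℝ) (hε : 0 < ε) (hε' : ε ≤ 1/2) (hlam : 1 ≤ lam)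
    (hth : 0 < th) (hth1 : th < 1) (hq : q * (ε + lam) = ε * th + lam)
    (x : ℝ) (hx : x ≠ q) :
    (1/2)*(q - th)^2 + lam * smoothW ε q < (1/2)*(x - th)^2 + lam * smoothW ε x := by
  have hεl : (0:ℝ) < ε + lam := by linarith
  have hq1 : 1 - ε < q := by nlinarith
  have hq2 : q < 1 := by nlinarith
  have hq0 : 0 < q := by linarith
  have hSq : smoothW ε q = (q-1)^2/(2*ε) := by
    rw [smoothW, abs_of_pos hq0]
    rw [if_neg (by push_neg; linarith), if_neg (by push_neg; linarith),
      if_pos (by linarith)]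
  rw [hSq]
  have e1 : (q - th)*(ε + lam) = lam*(1-th) := by linear_combination hq
  have e2 : (q - 1)*(ε + lam) = -(ε*(1-th)) := by linear_combination hq
  have hA : (1/2)*(q - th)^2 + lam * ((q-1)^2/(2*ε)) = lam*(1-th)^2/(2*(lam+ε)) := by
    have L : (1/2)*(q - th)^2 + lam * ((q-1)^2/(2*ε))
        = (ε*(q-th)^2 + lam*(q-1)^2)/(2*ε) := by field_simp
    rw [L, div_eq_div_iff (by positivity) (by positivity)]
    apply mul_left_cancel₀ (ne_of_gt hεl)
    linear_combination 2*ε*((q-th)*(ε+lam) + lam*(1-th))*e1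
      + 2*lam*((q-1)*(ε+lam) - ε*(1-th))*e2
  rw [hA]
  have aux : ∀ y : ℝ, 0 ≤ y → y ≠ q →
      lam*(1-th)^2/(2*(lam+ε)) < (1/2)*(y - th)^2 + lam * smoothW ε y := by
    intro y hy hyq
    rw [smoothW, abs_of_nonneg hy]
    split_ifs with h1 h2 h3
    · -- cap region: 0 ≤ y < ε
      have expand : (1/2)*(y - th)^2 + lam * (-y^2/(2*ε) + 1 - ε)
          - lam*(1-th)^2/(2*(lam+ε))
          = (ε*(lam+ε)*(y-th)^2 + lam*(lam+ε)*(2*ε-2*ε^2-y^2) - ε*lam*(1-th)^2)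
            / (2*ε*(lam+ε)) := by
        field_simp; ring
      have hpoly : 0 < ε*(lam+ε)*(y-th)^2 + lam*(lam+ε)*(2*ε-2*ε^2-y^2) - ε*lam*(1-th)^2 := by
        have P1 : 0 ≤ (lam+ε)*(ε-y)*((lam-ε)*(ε+y)+2*ε*th) := by
          apply mul_nonneg (mul_nonneg (by linarith) (by linarith))
          nlinarith
        have P2 : 0 ≤ ε*((lam+ε)*(1-2*ε)*(2*lam-1+2*th)) := by
          apply mul_nonneg hε.le
          apply mul_nonneg (mul_nonneg (by linarith) (by linarith)) (by linarith)
        have P3 : (0:ℝ) ≤ (ε*(lam-1+th))^2 := sq_nonneg _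
        have P4 : 0 < ε^3*(2*lam-2+2*th+ε) := by
          apply mul_pos (by positivity); linarith
        linarith [P1, P2, P3, P4]
      linarith [div_pos hpoly (by positivity : (0:ℝ) < 2*ε*(lam+ε)), expand]
    · -- middle region: ε ≤ y < 1-ε
      have expand : (1/2)*(y - th)^2 + lam * (-y + 1 - ε/2)
          - lam*(1-th)^2/(2*(lam+ε))
          = ((lam+ε)*(y-th)^2 + lam*(lam+ε)*(2-2*y-ε) - lam*(1-th)^2)
            / (2*(lam+ε)) := by
        field_simp; ring
      have hpoly : 0 < (lam+ε)*(y-th)^2 + lam*(lam+ε)*(2-2*y-ε) - lam*(1-th)^2 := by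
        have P : 0 ≤ (lam+ε)*(1-ε-y)*(2*lam - y - 1 + ε + 2*th) := by
          apply mul_nonneg (mul_nonneg (by linarith) (by linarith)); linarith
        have B : 0 < ε*((lam-1+th)^2 + ε*(2*lam-2+2*th+ε)) := by
          apply mul_pos hε; nlinarith [sq_nonneg (lam-1+th)]
        linarith [P, B]
      linarith [div_pos hpoly (by positivity : (0:ℝ) < 2*(lam+ε)), expand]
    · -- valley region: 1-ε ≤ y < 1+ε
      have expand : (1/2)*(y - th)^2 + lam * ((y-1)^2/(2*ε))
          - lam*(1-th)^2/(2*(lam+ε))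
          = ((lam+ε)^2*(y-q)^2) / (2*ε*(lam+ε)) := by
        rw [eq_div_iff (by positivity : (2*ε*(lam+ε)) ≠ 0)]
        have L : ((1/2)*(y - th)^2 + lam * ((y-1)^2/(2*ε))
              - lam*(1-th)^2/(2*(lam+ε))) * (2*ε*(lam+ε))
            = ε*(lam+ε)*(y-th)^2 + lam*(lam+ε)*(y-1)^2 - ε*lam*(1-th)^2 := by
          field_simp
        rw [L]
        linear_combination (2*((lam+ε)*y - ε*th - lam) - (q*(ε+lam) - ε*th - lam)) * hq
      have hsq : 0 < (y - q)^2 :=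
        lt_of_le_of_ne (sq_nonneg _) (Ne.symm (pow_ne_zero 2 (sub_ne_zero.mpr hyq)))
      have hpos : 0 < ((lam+ε)^2*(y-q)^2) / (2*ε*(lam+ε)) :=
        div_pos (mul_pos (by positivity) hsq) (by positivity)
      linarith [expand, hpos]
    · -- far region: y ≥ 1+ε
      have expand : (1/2)*(y - th)^2 + lam * (y - 1 - ε/2)
          - lam*(1-th)^2/(2*(lam+ε))
          = ((lam+ε)*(y-th)^2 + lam*(lam+ε)*(2*y-2-ε) - lam*(1-th)^2)
            / (2*(lam+ε)) := by
        field_simp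
      have hpoly : 0 < (lam+ε)*(y-th)^2 + lam*(lam+ε)*(2*y-2-ε) - lam*(1-th)^2 := by
        push_neg at h3
        have P : 0 ≤ (lam+ε)*(y-1-ε)*(y+1+ε-2*th+2*lam) := by
          apply mul_nonneg (mul_nonneg (by linarith) (by linarith)); linarith
        have B : 0 < ε*(1-th)^2 + (lam+ε)*ε*(2+ε-2*th) + lam*ε*(lam+ε) := by
          have : 0 < (lam+ε)*ε*(2+ε-2*th) := by
            apply mul_pos (mul_pos (by linarith : (0:ℝ) < lam+ε) hε); linarith
          nlinarith [sq_nonneg (1-th), mul_pos (mul_pos (by linarith : (0:ℝ) < lam) hε) hεl]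
        linarith [P, B]
      linarith [div_pos hpoly (by positivity : (0:ℝ) < 2*(lam+ε)), expand]
  rcases le_or_gt 0 x with hx0 | hx0
  · exact aux x hx0 hx
  · have hev : smoothW ε x = smoothW ε (-x) := (smoothW_neg ε x).symm
    have h2 : lam*(1-th)^2/(2*(lam+ε)) ≤ (1/2)*((-x) - th)^2 + lam * smoothW ε (-x) := by
      rcases eq_or_ne (-x) q with hxq | hxq
      · rw [hxq, hSq]; exact le_of_eq hA.symm
      · exact (aux (-x) (by linarith) hxq).le
    nlinarith [h2, hev, mul_pos hth (neg_pos.mpr hx0)]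


/-- Non-convergence of the lazy prox-gradient method: with `L(θ) = θ²/2`,
`R` the smoothed W-shaped regularizer, `λ ≥ 1`, stepsize `η ∈ (0, 1/2]` and
`θ₀ = ηλ/(2λ + (2-η)ε)`, the prox point satisfies `prox_{λR}(θ₀) = (2/η)θ₀`
and the lazy prox-gradient iterates oscillate: `θ_t = (-1)^t θ₀`. -/
theorem lazy_proxGradient_oscillates (ε lam η : ℝ) (hε : 0 < ε) (hε' : ε ≤ 1/2)
    (hlam : 1 ≤ lam) (hη : 0 < η) (hη' : η ≤ 1/2)
    (θ p : ℕ → ℝ)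
    (hθ0 : θ 0 = η * lam / (2 * lam + (2 - η) * ε))
    (hprox : ∀ t, ∀ x : ℝ,
      (1/2) * (p t - θ t)^2 + lam * smoothW ε (p t)
        ≤ (1/2) * (x - θ t)^2 + lam * smoothW ε x)
    (hiter : ∀ t, θ (t+1) = θ t - η * p t) :
    p 0 = (2/η) * θ 0 ∧ ∀ t, θ t = (-1)^t * θ 0 := by
  have hD : (0:ℝ) < 2 * lam + (2 - η) * ε := by nlinarith
  set θ0 : ℝ := η * lam / (2 * lam + (2 - η) * ε) with hθ0def
  have hεl : (0:ℝ) < ε + lam := by linarith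
  have hθ0pos : 0 < θ0 := div_pos (by nlinarith) hD
  have hθ0lt1 : θ0 < 1 := by
    rw [hθ0def, div_lt_one hD]; nlinarith
  set q : ℝ := (ε * θ0 + lam) / (ε + lam) with hqdef
  have hq : q * (ε + lam) = ε * θ0 + lam := div_mul_cancel₀ _ (ne_of_gt hεl)
  have hq2 : q = (2/η) * θ0 := by
    rw [hqdef, hθ0def]
    rw [div_eq_iff hεl.ne']
    have k1 := div_mul_cancel₀ (η * lam) hD.ne'
    have k2 := mul_inv_cancel₀ hη.ne'
    linear_combination (-η⁻¹) * k1 - (ε * (η * lam / (2 * lam + (2 - η) * ε)) + lam) * k2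
  -- uniqueness of prox for positive parameter
  have uniqP : ∀ t, θ t = θ0 → p t = q := by
    intro t ht
    by_contra hne
    have h1 := keyLem ε lam θ0 q hε hε' hlam hθ0pos hθ0lt1 hq (p t) hne
    have h2 := hprox t q
    rw [ht] at h2
    linarith
  have uniqN : ∀ t, θ t = -θ0 → p t = -q := by
    intro t ht
    by_contra hne
    have hne' : -(p t) ≠ q := fun h => hne (by linarith [h])
    have h1 := keyLem ε lam θ0 q hε hε' hlam hθ0pos hθ0lt1 hq (-(p t)) hne'
    have h2 := hprox t (-q)
    rw [ht] at h2
    rw [smoothW_neg] at h1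
    have e1 : (1/2) * (p t - -θ0)^2 = (1/2)*(-(p t) - θ0)^2 := by ring
    have e2 : (1/2) * (-q - -θ0)^2 = (1/2)*(q - θ0)^2 := by ring
    rw [e1, e2, smoothW_neg] at h2
    linarith
  have main : ∀ t, θ t = (-1)^t * θ0 ∧ p t = (-1)^t * q := by
    intro t
    induction t with
    | zero => exact ⟨by simpa using hθ0, by simpa using uniqP 0 hθ0⟩
    | succ n ih =>
      obtain ⟨ihθ, ihp⟩ := ih
      have hstep : θ (n+1) = (-1)^(n+1) * θ0 := by
        rw [hiter n, ihθ, ihp]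
        have : η * q = 2 * θ0 := by rw [hq2]; field_simp
        rw [pow_succ]
        linear_combination (-(-1:ℝ)^n) * this
      refine ⟨hstep, ?_⟩
      rcases Nat.even_or_odd (n+1) with he | ho
      · have h1 : ((-1:ℝ))^(n+1) = 1 := he.neg_one_pow
        have h2 := uniqP (n+1) (by rw [hstep, h1, one_mul])
        rw [h1, one_mul]; exact h2
      · have h1 : ((-1:ℝ))^(n+1) = -1 := ho.neg_one_pow
        have h2 := uniqN (n+1) (by rw [hstep, h1]; ring)
        rw [h1]; rw [h2]; ring
  refine ⟨?_, fun t => by rw [(main t).1, hθ0]⟩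
  have h0 := (main 0).2
  simp only [pow_zero, one_mul] at h0
  rw [h0, hq2, hθ0]
end

section
/- (Fixed point characterization for BinaryConnect, necessity) Consider the iteration s_t = sign(θ_t), θ_{t+1} = θ_t - η_t ∇L(s_t) in R^d with Σ_t η_t = ∞, η_t ≥ 0. If s ∈ {±1}^d is a fixed point (i.e., there exists θ_0 with sign(θ_0) = s and sign(θ_t) = s for all t), then for every coordinate i with ∇L(s)[i] ≠ 0 we have sign(∇L(s)[i]) = -s[i]. -/
/-- Necessity of the fixed-point condition for BinaryConnect: if `s ∈ {±1}^d`
is a fixed point (the sign pattern of the iterates `θ_{t+1} = θ_t - η_t ∇L(s)`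
stays equal to `s` forever) and `Σ_t η_t = ∞`, then every coordinate `i` with
`∇L(s)[i] ≠ 0` satisfies `sign(∇L(s)[i]) = -s[i]`. -/
theorem binaryConnect_fixed_point_necessary {d : ℕ}
    (L : EuclideanSpace ℝ (Fin d) → ℝ) (hL : Differentiable ℝ L)
    (η : ℕ → ℝ) (hη : ∀ t, 0 ≤ η t)
    (hdiv : Filter.Tendsto (fun T => ∑ t ∈ Finset.range T, η t)
      Filter.atTop Filter.atTop)
    (s : EuclideanSpace ℝ (Fin d)) (θ : ℕ → EuclideanSpace ℝ (Fin d))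
    (hsign : ∀ t i, sgn (θ t i) = s i)
    (hiter : ∀ t, θ (t+1) = θ t - η t • gradient L s) :
    ∀ i, gradient L s i ≠ 0 → sgn (gradient L s i) = - s i := by
  intro i hg
  set g := gradient L s i with hgdef
  have key : ∀ T, θ T i = θ 0 i - (∑ t ∈ Finset.range T, η t) * g := by
    intro T
    induction T with
    | zero => simp
    | succ n ih =>
      have := hiter n
      have h2 : θ (n+1) i = θ n i - η n * g := by
        rw [this]; simp [hgdef]
      rw [h2, ih, Finset.sum_range_succ]; ring
  have sgn_cases : ∀ x : ℝ, sgn x = 1 ∨ sgn x = -1 := by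
    intro x; unfold sgn; split <;> simp
  by_contra hne
  -- sgn g ∈ {1,-1}, s i = sgn (θ 0 i) ∈ {1,-1}
  have hs0 : s i = sgn (θ 0 i) := (hsign 0 i).symm
  -- since sgn g ≠ - s i, sgn g = s i
  rcases le_or_gt 0 g with hgpos | hgneg
  · have hgpos' : 0 < g := lt_of_le_of_ne hgpos (Ne.symm hg)
    have hsg : sgn g = 1 := by simp [sgn, hgpos]
    -- then s i ≠ -1, so s i = 1 (since sgn g ≠ -s i, -s i ≠ 1, s i ≠ -1)
    have hsi : s i = 1 := by
      rcases sgn_cases (θ 0 i) with h | h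
      · rw [hs0, h]
      · exact absurd (by rw [hsg, hs0, h]; ring) hne
    -- θ T i → -∞, eventually negative
    obtain ⟨T, hT⟩ := (hdiv.eventually_ge_atTop ((θ 0 i + 1) / g)).exists
    have hθT : θ T i < 0 := by
      rw [key T]
      have : (θ 0 i + 1) ≤ (∑ t ∈ Finset.range T, η t) * g := by
        rw [div_le_iff₀ hgpos'] at hT; linarith
      linarith
    have := hsign T i
    rw [hsi] at this
    simp [sgn, not_le.mpr hθT] at this
    linarith
  · have hsg : sgn g = -1 := by simp [sgn, not_le.mpr hgneg]
    have hsi : s i = -1 := by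
      rcases sgn_cases (θ 0 i) with h | h
      · exact absurd (by rw [hsg, hs0, h]) hne
      · rw [hs0, h]
    obtain ⟨T, hT⟩ := (hdiv.eventually_ge_atTop ((θ 0 i) / g)).exists
    have hθT : 0 ≤ θ T i := by
      rw [key T]
      have : (∑ t ∈ Finset.range T, η t) * g ≤ θ 0 i := by
        rw [div_le_iff_of_neg hgneg] at hT; linarith
      linarith
    have := hsign T i
    rw [hsi] at this
    simp [sgn, hθT] at this
    norm_num at this
end

section
/- (Fixed point characterization for BinaryConnect, sufficiency) With the iteration s_t = sign(θ_t), θ_{t+1} = θ_t - η_t ∇L(s_t), if s ∈ {±1}^d satisfies sign(∇L(s)[i]) = -s[i] for every i with ∇L(s)[i] ≠ 0, then for any θ_0 with sign(θ_0) = s, the iterates satisfy sign(θ_t) = s for all t ≥ 0; i.e., s is a fixed point. -/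
/-- Sufficiency of the fixed-point condition for BinaryConnect: if `s ∈ {±1}^d`
satisfies `sign(∇L(s)[i]) = -s[i]` for every `i` with `∇L(s)[i] ≠ 0`, then for
any initialization `θ₀` with `sign(θ₀) = s`, the BinaryConnect iterates
`θ_{t+1} = θ_t - η_t ∇L(sign(θ_t))` keep the sign pattern `s` forever. -/
theorem binaryConnect_fixed_point_sufficient {d : ℕ}
    (L : EuclideanSpace ℝ (Fin d) → ℝ) (hL : Differentiable ℝ L)
    (η : ℕ → ℝ) (hη : ∀ t, 0 ≤ η t)
    (s : EuclideanSpace ℝ (Fin d))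
    (hcond : ∀ i, gradient L s i ≠ 0 → sgn (gradient L s i) = - s i)
    (θ : ℕ → EuclideanSpace ℝ (Fin d))
    (hsign0 : ∀ i, sgn (θ 0 i) = s i)
    (hiter : ∀ t, θ (t+1) = θ t - η t •
      gradient L ((WithLp.equiv 2 (Fin d → ℝ)).symm (fun i => sgn (θ t i)))) :
    ∀ t i, sgn (θ t i) = s i := by
  intro t
  induction t with
  | zero => exact hsign0
  | succ t ih =>
    intro i
    have hs : ((WithLp.equiv 2 (Fin d → ℝ)).symm (fun i => sgn (θ t i))) = s := by
      apply PiLp.ext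
      intro j
      exact ih j
    have hstep : θ (t+1) i = θ t i - η t * gradient L s i := by
      rw [hiter t, hs]
      rfl
    have hsi := ih i
    by_cases hg : gradient L s i = 0
    · rw [hstep, hg]
      simpa using hsi
    · have hc := hcond i hg
      unfold sgn at *
      by_cases h0 : (0:ℝ) ≤ θ t i
      · -- s i = 1, so sgn(grad) = -1, grad < 0
        rw [if_pos h0] at hsi
        rw [← hsi] at hc
        have hgneg : gradient L s i < 0 := by
          by_contra h
          push_neg at h
          rw [if_pos h] at hc; linarith
        have : (0:ℝ) ≤ θ (t+1) i := by
          rw [hstep]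
          nlinarith [hη t]
        rw [if_pos this, ← hsi]
      · -- s i = -1, grad ≥ 0
        rw [if_neg h0] at hsi
        rw [← hsi] at hc
        have hgpos : (0:ℝ) ≤ gradient L s i := by
          by_contra h
          push_neg at h
          rw [if_neg (not_le.mpr h)] at hc; linarith
        have hlt : θ (t+1) i < 0 := by
          rw [hstep]
          push_neg at h0
          nlinarith [hη t]
        rw [if_neg (not_le.mpr hlt), ← hsi]
end
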